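/- Let F be the free group of rank m ≥ 2 and let a, b ∈ Σ with b ∉ {a, a^{-1}}. Then for all real t ∈ (−1,1): g_{C(a,b)}(t) = t²/(4m²(1−t)) + t²/(4m²(2m−1+t)). -/

import Mathlib

open Filter Set

noncomputable section

/-- The free group of rank `m`. -/
abbrev FG (m : ℕ) := FreeGroup (Fin m)

/-- The length of the reduced word of `g`. -/
def glen {m : ℕ} (g : FG m) : ℕ := (FreeGroup.toWord g).length

/-- The cardinality of the sphere of radius `k` in the free group of rank `m`,
as a real number: `1` if `k = 0` and `2m(2m-1)^(k-1)` otherwise. -/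
def sphereCard (m k : ℕ) : ℝ :=
  if k = 0 then 1 else 2 * (m : ℝ) * (2 * (m : ℝ) - 1) ^ (k - 1)

/-- `n_k(R)`: the number of elements of length `k` in `R`. -/
def nk {m : ℕ} (R : Set (FG m)) (k : ℕ) : ℕ := {g ∈ R | glen g = k}.ncard

/-- `f_k(R) = n_k(R) / |S_k|`: the frequency of elements of `R` among words of length `k`. -/
def fk {m : ℕ} (R : Set (FG m)) (k : ℕ) : ℝ := (nk R k : ℝ) / sphereCard m k

/-- The frequency generating function `g_R(t) = ∑ f_k(R) t^k`. -/
def genFun {m : ℕ} (R : Set (FG m)) (t : ℝ) : ℝ := ∑' k : ℕ, fk R k * t ^ k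

/-- The adjusted generating function `g*_R(t) = ∑ n_k(R) (t/(2m-1))^k`. -/
def genFunStar {m : ℕ} (R : Set (FG m)) (t : ℝ) : ℝ :=
  ∑' k : ℕ, (nk R k : ℝ) * (t / (2 * (m : ℝ) - 1)) ^ k

/-- `R` is thick: `lim_{t→1⁻} (1-t)·g_R(t)` exists and is positive. -/
def IsThick {m : ℕ} (R : Set (FG m)) : Prop :=
  ∃ c : ℝ, 0 < c ∧
    Tendsto (fun t => (1 - t) * genFun R t) (nhdsWithin 1 (Set.Iio 1)) (nhds c)

/-- `R` is exponentially negligible (exponentially λ-measurable): there is `δ ∈ (0,1)`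
with `f_k(R) < δ^k` for all sufficiently large `k`. -/
def ExpNegligible {m : ℕ} (R : Set (FG m)) : Prop :=
  ∃ δ : ℝ, 0 < δ ∧ δ < 1 ∧ ∀ᶠ k : ℕ in atTop, fk R k < δ ^ k

/-- `R ⊆ F` is a regular set if the language of reduced words of its elements
(over the alphabet `Σ = X ∪ X⁻¹`, encoded as `Fin m × Bool`) is a regular language. -/
def IsRegularSet {m : ℕ} (R : Set (FG m)) : Prop :=
  Language.IsRegular {w : List (Fin m × Bool) | ∃ g ∈ R, FreeGroup.toWord g = w}

/-- The cone `C(w) = { wf : |wf| = |w| + |f| }`. -/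
def cone {m : ℕ} (w : FG m) : Set (FG m) :=
  {g | ∃ f, g = w * f ∧ glen g = glen w + glen f}

/-- The right cone `C[w] = { fw : |fw| = |f| + |w| }`. -/
def coneR {m : ℕ} (w : FG m) : Set (FG m) :=
  {g | ∃ f, g = f * w ∧ glen g = glen f + glen w}

/-- The double-based cone `C(u,v) = { ufv : |ufv| = |u| + |f| + |v| }`. -/
def dcone {m : ℕ} (u v : FG m) : Set (FG m) :=
  {g | ∃ f, g = u * f * v ∧ glen g = glen u + glen f + glen v}

/-- The prefix closure of `R`. -/
def prefixClosure {m : ℕ} (R : Set (FG m)) : Set (FG m) :=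
  {p | ∃ g ∈ R, ∃ s, g = p * s ∧ glen g = glen p + glen s}

/-- A finite deterministic partial automaton over the alphabet
`Σ = X ∪ X⁻¹` (encoded as `Fin m × Bool`), with one initial and one final state. -/
structure PAut (m : ℕ) where
  n : ℕ
  step : Fin n → Fin m × Bool → Option (Fin n)
  start : Fin n
  accept : Fin n

namespace PAut

variable {m : ℕ}

/-- Run the automaton from state `s` on the word `w`. -/
def evalFrom (A : PAut m) : Fin A.n → List (Fin m × Bool) → Option (Fin A.n)
  | s, [] => some s
  | s, a :: w =>
    match A.step s a with
    | none => none
    | some s' => A.evalFrom s' w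

/-- The set of words accepted by `A`. -/
def words (A : PAut m) : Set (List (Fin m × Bool)) :=
  {w | A.evalFrom A.start w = some A.accept}

/-- The language of `A`, identified with a subset of the free group. -/
def lang (A : PAut m) : Set (FG m) :=
  (fun w => FreeGroup.mk w) '' A.words

/-- Conditions (c)–(f) of a special automaton:
(c) every state is reachable from the initial state;
(d) the final state is reachable from every state;
(e) all transitions entering a given state carry the same label (the type of the state);
(f) if a state has type `x`, no transition labeled `x⁻¹` leaves it. -/
def CoreSpecial (A : PAut m) : Prop :=
  (∀ s, ∃ w, A.evalFrom A.start w = some s) ∧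
  (∀ s, ∃ w, A.evalFrom s w = some A.accept) ∧
  (∀ s₁ a₁ s₂ a₂ s, A.step s₁ a₁ = some s → A.step s₂ a₂ = some s → a₁ = a₂) ∧
  (∀ s' a s, A.step s' a = some s → A.step s (a.1, !a.2) = none)

/-- A special automaton over the free group: conditions (a)–(f), with distinct
initial and final states and no transition entering the initial state. -/
def IsSpecial (A : PAut m) : Prop :=
  A.start ≠ A.accept ∧ (∀ s a, A.step s a ≠ some A.start) ∧ A.CoreSpecial

/-- A special monoid automaton: conditions (c)–(f), with the initial state equal to
the final state. -/
def IsSpecialMonoidAut (A : PAut m) : Prop :=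
  A.start = A.accept ∧ A.CoreSpecial

/-- `A` is `Σ`-complete: every state `s` has a type `x` and for every label
`y ≠ x⁻¹` the transition `δ(s,y)` is defined. -/
def SigmaComplete (A : PAut m) : Prop :=
  ∀ s, ∃ a, (∃ s', A.step s' a = some s) ∧
    ∀ b, b ≠ (a.1, !a.2) → (A.step s b).isSome

end PAut

/-- A special monoid: the language of a special monoid automaton. -/
def IsSpecialMonoid {m : ℕ} (M : Set (FG m)) : Prop :=
  ∃ A : PAut m, A.IsSpecialMonoidAut ∧ M = A.lang

/-- A thick monoid: the language of a `Σ`-complete special monoid automaton. -/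
def IsThickMonoid {m : ℕ} (M : Set (FG m)) : Prop :=
  ∃ A : PAut m, A.IsSpecialMonoidAut ∧ A.SigmaComplete ∧ M = A.lang

/-! An element of `C(a,b)` of length `n + 2` is exactly a reduced word `a w b`, so
`n_{n+2}(C(a,b))` is the number `N_{n+1}(a,b)` of reduced words of length `n + 2` from `a` to `b`.
Removing the first letter gives `N_{n+1}(x,y) = (2m-1)^n - N_n(x⁻¹,y)`, and for `y ∉ {x, x⁻¹}`
this recursion solves to `2m · N_n(x,y) = (2m-1)^n - (-1)^n`. Hence
`f_{n+2} = (1 - (-1/(2m-1))^(n+1)) / (4m²)`, and `g_{C(a,b)}` is a combination of two geometric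
series. -/

theorem List.exists_eq_singleton_append_append_singleton_iff {β : Type*} {L : List β} {x y : β}
    (hL : 2 ≤ L.length) :
    (∃ w, L = [x] ++ w ++ [y]) ↔ L.head? = some x ∧ L.getLast? = some y := by
  constructor
  · rintro ⟨w, rfl⟩
    exact ⟨rfl, List.getLast?_concat⟩
  · rintro ⟨hx, hy⟩
    obtain ⟨z, L, rfl⟩ : ∃ z L', L = z :: L' := by
      rcases L with _ | ⟨z, L'⟩ <;> simp_all
    obtain ⟨w, y', rfl⟩ : ∃ w y', L = w ++ [y'] := by
      rcases L.eq_nil_or_concat with h | ⟨w, y', h⟩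
      · simp [h] at hL
      · exact ⟨w, y', by simpa using h⟩
    simp only [List.head?_cons, Option.some.injEq] at hx
    simp only [← List.cons_append, List.getLast?_concat, Option.some.injEq] at hy
    exact ⟨w, by simp [hx, hy]⟩

theorem hasSum_one_sub_pow_mul_geometric {r t : ℝ} (ht : |t| < 1) (hrt : |r * t| < 1) :
    HasSum (fun n : ℕ => (1 - r ^ (n + 1)) * t ^ n) ((1 - t)⁻¹ - r * (1 - r * t)⁻¹) := by
  refine ((hasSum_geometric_of_abs_lt_one ht).sub
    ((hasSum_geometric_of_abs_lt_one hrt).mul_left r)).congr_fun fun n => ?_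
  ring

namespace FreeGroup

open scoped Finset

variable {α : Type*}

open Classical in
noncomputable def redWords [Finite α] (n : ℕ) (x y : α × Bool) : Finset (List (α × Bool)) :=
  (List.finite_length_eq (α × Bool) (n + 1)).toFinset.filter
    fun w => IsReduced w ∧ w.head? = some x ∧ w.getLast? = some y

theorem mem_redWords [Finite α] {n : ℕ} {x y : α × Bool} {w : List (α × Bool)} :
    w ∈ redWords n x y ↔
      IsReduced w ∧ w.length = n + 1 ∧ w.head? = some x ∧ w.getLast? = some y := by
  simp [redWords, and_left_comm]

variable [Fintype α] [DecidableEq α]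

theorem card_redWords_zero (x y : α × Bool) :
    #(redWords 0 x y) = if x = y then 1 else 0 := by
  have : redWords 0 x y = if x = y then {[x]} else ∅ := by
    ext w
    rw [mem_redWords, List.length_eq_one_iff]
    split_ifs with h <;> constructor
    · rintro ⟨-, ⟨z, rfl⟩, hz, -⟩
      simp_all
    · rintro hw
      simp_all [IsReduced.singleton]
    · rintro ⟨-, ⟨z, rfl⟩, hz, hy⟩
      simp_all
    · simp
  split_ifs at this ⊢ <;> simp [this]

theorem redWords_succ (n : ℕ) (x y : α × Bool) :
    redWords (n + 1) x y =
      (Finset.univ.erase (x.1, !x.2)).biUnion fun c => (redWords n c y).image (x :: ·) := by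
  ext w
  simp only [Finset.mem_biUnion, Finset.mem_erase, Finset.mem_univ, and_true,
    Finset.mem_image, mem_redWords]
  constructor
  · rintro ⟨hred, hlen, hx, hy⟩
    obtain ⟨z, c, v, rfl⟩ : ∃ z c v, w = z :: c :: v := by
      rcases w with _ | ⟨z, _ | ⟨c, v⟩⟩ <;> simp_all
    obtain ⟨hzc, hred⟩ := isReduced_cons_cons.1 hred
    simp only [List.head?_cons, Option.some.injEq] at hx
    subst hx
    refine ⟨c, ?_, c :: v, ⟨hred, by simpa using hlen, rfl, by simpa using hy⟩, rfl⟩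
    rintro rfl
    simp at hzc
  · rintro ⟨c, hc, v, ⟨hred, hlen, hv, hy⟩, rfl⟩
    obtain ⟨v, rfl⟩ : ∃ v', v = c :: v' := by
      rcases v with _ | ⟨c', v'⟩ <;> simp_all
    refine ⟨isReduced_cons_cons.2 ⟨?_, hred⟩, by simpa using hlen, rfl, by simpa using hy⟩
    intro h1
    by_contra h2
    exact hc (Prod.ext h1.symm (Bool.eq_not_iff.2 (Ne.symm h2)))

theorem card_redWords_succ (n : ℕ) (x y : α × Bool) :
    #(redWords (n + 1) x y) = ∑ c ∈ Finset.univ.erase (x.1, !x.2), #(redWords n c y) := by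
  rw [redWords_succ, Finset.card_biUnion]
  · exact Finset.sum_congr rfl fun c _ => Finset.card_image_of_injective _ List.cons_injective
  · intro c _ d _ hcd
    simp only [Function.onFun, Finset.disjoint_left, Finset.mem_image, mem_redWords]
    rintro _ ⟨v, ⟨-, -, hv, -⟩, rfl⟩ ⟨u, ⟨-, -, hu, -⟩, hvu⟩
    cases List.cons_injective hvu
    exact hcd (Option.some_injective _ (hv.symm.trans hu))

theorem card_redWords_succ_eq_sub (n : ℕ) (x y : α × Bool) :
    (#(redWords (n + 1) x y) : ℤ) =
      ∑ c, (#(redWords n c y) : ℤ) - #(redWords n (x.1, !x.2) y) := by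
  rw [card_redWords_succ, Nat.cast_sum, Finset.sum_erase_eq_sub (Finset.mem_univ _)]

theorem sum_card_redWords (n : ℕ) (y : α × Bool) :
    ∑ x, (#(redWords n x y) : ℤ) = (2 * Fintype.card α - 1) ^ n := by
  induction n with
  | zero => simp [card_redWords_zero]
  | succ n ih =>
    have hinv : ∑ x : α × Bool, (#(redWords n (x.1, !x.2) y) : ℤ) =
        ∑ x, (#(redWords n x y) : ℤ) :=
      (Equiv.prodCongr (Equiv.refl α) Equiv.boolNot).sum_comp fun x => (#(redWords n x y) : ℤ)
    simp only [card_redWords_succ_eq_sub, Finset.sum_sub_distrib, hinv, Finset.sum_const,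
      Finset.card_univ, Fintype.card_prod, Fintype.card_bool, ih]
    ring

theorem card_redWords_of_ne (n : ℕ) {x y : α × Bool} (hyx : y ≠ x) (hyx' : y ≠ (x.1, !x.2)) :
    (#(redWords n x y) : ℤ) * (2 * Fintype.card α) =
      (2 * Fintype.card α - 1) ^ n - (-1) ^ n := by
  induction n generalizing x with
  | zero => simp [card_redWords_zero, Ne.symm hyx]
  | succ n ih =>
    have ih' := @ih (x.1, !x.2) hyx' (by simpa using hyx)
    rw [card_redWords_succ_eq_sub, sum_card_redWords]
    linear_combination (-1 : ℤ) * ih'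

end FreeGroup

section DoubleCone

open scoped Finset
open FreeGroup

variable {m : ℕ}

theorem toWord_mul_of_glen_mul {x y : FG m} (h : glen (x * y) = glen x + glen y) :
    (x * y).toWord = x.toWord ++ y.toWord :=
  (toWord_mul_sublist x y).eq_of_length (by rw [List.length_append]; exact h)

theorem mem_dcone_iff {u v g : FG m} :
    g ∈ dcone u v ↔ ∃ w, g.toWord = u.toWord ++ w ++ v.toWord := by
  constructor
  · rintro ⟨f, rfl, hlen⟩
    have h1 : glen (u * f * v) ≤ glen (u * f) + glen v := norm_mul_le _ _
    have h2 : glen (u * f) ≤ glen u + glen f := norm_mul_le _ _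
    refine ⟨f.toWord, ?_⟩
    rw [toWord_mul_of_glen_mul (by omega), toWord_mul_of_glen_mul (by omega)]
  · rintro ⟨w, hw⟩
    have hred : IsReduced w := isReduced_toWord.infix ⟨u.toWord, v.toWord, hw.symm⟩
    refine ⟨mk w, ?_, ?_⟩
    · rw [← mk_toWord (x := g), hw, ← mul_mk, ← mul_mk, mk_toWord, mk_toWord]
    · simp [glen, hw, hred.reduce_eq, add_assoc]

theorem le_glen_of_mem_dcone {u v g : FG m} (hg : g ∈ dcone u v) :
    glen u + glen v ≤ glen g := by
  obtain ⟨f, -, hlen⟩ := hg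
  omega

theorem nk_dcone_of_lt {u v : FG m} {k : ℕ} (hk : k < glen u + glen v) :
    nk (dcone u v) k = 0 := by
  have hempty : {g ∈ dcone u v | glen g = k} = ∅ :=
    Set.eq_empty_of_forall_notMem fun g hg => by
      have := le_glen_of_mem_dcone hg.1
      have : glen g = k := hg.2
      omega
  rw [nk, hempty, Set.ncard_empty]

variable {a b : FG m} {A B : Fin m × Bool}

theorem image_toWord_dcone_sphere (hA : a.toWord = [A]) (hB : b.toWord = [B]) (n : ℕ) :
    toWord '' {g ∈ dcone a b | glen g = n + 2} = redWords (n + 1) A B := by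
  ext L
  simp only [Set.mem_image, Set.mem_ofPred_eq, mem_dcone_iff, hA, hB, Finset.mem_coe,
    mem_redWords]
  constructor
  · rintro ⟨g, ⟨hg, hlen⟩, rfl⟩
    exact ⟨isReduced_toWord, hlen,
      (List.exists_eq_singleton_append_append_singleton_iff (by rw [← glen, hlen]; omega)).1 hg⟩
  · rintro ⟨hred, hlen, hends⟩
    refine ⟨mk L, ⟨?_, ?_⟩, ?_⟩ <;> simp only [toWord_mk, glen, hred.reduce_eq, hlen]
    exact (List.exists_eq_singleton_append_append_singleton_iff (by omega)).2 hends

theorem nk_dcone_add_two (hA : a.toWord = [A]) (hB : b.toWord = [B]) (n : ℕ) :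
    nk (dcone a b) (n + 2) = #(redWords (n + 1) A B) := by
  rw [nk, ← Set.ncard_image_of_injective _ toWord_injective, image_toWord_dcone_sphere hA hB,
    Set.ncard_coe_finset]

theorem fk_dcone_add_two (hA : a.toWord = [A]) (hB : b.toWord = [B]) (hBA : B ≠ A)
    (hBA' : B ≠ (A.1, !A.2)) (n : ℕ) :
    fk (dcone a b) (n + 2) = (1 - (-(2 * (m : ℝ) - 1)⁻¹) ^ (n + 1)) / (4 * (m : ℝ) ^ 2) := by
  have hm : (1 : ℝ) ≤ m := by exact_mod_cast Fin.pos A.1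
  have hcount : (#(redWords (n + 1) A B) : ℝ) * (2 * m) =
      (2 * m - 1) ^ (n + 1) - (-1) ^ (n + 1) := by
    have := card_redWords_of_ne (n + 1) hBA hBA'
    rw [Fintype.card_fin] at this
    exact_mod_cast this
  have hq : (2 * (m : ℝ) - 1) ≠ 0 := by linarith
  rw [fk, nk_dcone_add_two hA hB, sphereCard, if_neg (by omega), show n + 2 - 1 = n + 1 by omega,
    neg_pow, inv_pow]
  field_simp
  linear_combination 2 * hcount

theorem hasSum_fk_dcone_mul_pow (hA : a.toWord = [A]) (hB : b.toWord = [B]) (hBA : B ≠ A)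
    (hBA' : B ≠ (A.1, !A.2)) {t : ℝ} (ht : |t| < 1) :
    HasSum (fun k => fk (dcone a b) k * t ^ k)
      (t ^ 2 / (4 * (m : ℝ) ^ 2 * (1 - t))
        + t ^ 2 / (4 * (m : ℝ) ^ 2 * (2 * (m : ℝ) - 1 + t))) := by
  have hm : (1 : ℝ) ≤ m := by exact_mod_cast Fin.pos A.1
  have hrt : |-(2 * (m : ℝ) - 1)⁻¹ * t| < 1 := by
    rw [abs_mul, abs_neg, abs_inv, abs_of_pos (by linarith)]
    calc (2 * (m : ℝ) - 1)⁻¹ * |t| ≤ 1 * |t| := by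
          gcongr
          exact inv_le_one_of_one_le₀ (by linarith)
      _ < 1 := by linarith
  have hglen : ∀ {g : FG m} {L : Fin m × Bool}, g.toWord = [L] → glen g = 1 := fun h => by
    simp [glen, h]
  have hlow : ∀ k < 2, fk (dcone a b) k = 0 := fun k hk => by
    rw [fk, nk_dcone_of_lt (by rw [hglen hA, hglen hB]; exact hk), Nat.cast_zero, zero_div]
  rw [← hasSum_nat_add_iff' 2]
  simp only [Finset.sum_range_succ, Finset.sum_range_zero, hlow 0 (by norm_num),
    hlow 1 (by norm_num), zero_mul, add_zero, sub_zero, fk_dcone_add_two hA hB hBA hBA']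
  have h1 : 1 - t ≠ 0 := by linarith [abs_lt.1 ht]
  have h2 : 2 * (m : ℝ) - 1 + t ≠ 0 := by linarith [abs_lt.1 ht]
  have hq : 2 * (m : ℝ) - 1 ≠ 0 := by linarith
  have hval : t ^ 2 / (4 * (m : ℝ) ^ 2 * (1 - t))
        + t ^ 2 / (4 * (m : ℝ) ^ 2 * (2 * (m : ℝ) - 1 + t))
      = t ^ 2 / (4 * (m : ℝ) ^ 2) *
        ((1 - t)⁻¹ - -(2 * (m : ℝ) - 1)⁻¹ * (1 - -(2 * (m : ℝ) - 1)⁻¹ * t)⁻¹) := by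
    generalize 2 * (m : ℝ) - 1 = q at hq h2 ⊢
    rw [show 1 - -q⁻¹ * t = (q + t) / q by field_simp; ring, inv_div]
    field_simp
    ring
  rw [hval]
  exact ((hasSum_one_sub_pow_mul_geometric ht hrt).mul_left _).congr_fun fun n => by ring

end DoubleCone

theorem stmt14_general {m : ℕ} (a b : FG m)
    (ha : glen a = 1) (hb : glen b = 1) (hba : b ≠ a) (hba' : b ≠ a⁻¹) :
    ∀ t ∈ Set.Ioo (-1 : ℝ) 1,
      genFun (dcone a b) t
        = t ^ 2 / (4 * (m : ℝ) ^ 2 * (1 - t))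
          + t ^ 2 / (4 * (m : ℝ) ^ 2 * (2 * (m : ℝ) - 1 + t)) := by
  intro t ht
  obtain ⟨A, hA⟩ := List.length_eq_one_iff.1 ha
  obtain ⟨B, hB⟩ := List.length_eq_one_iff.1 hb
  have hBA : B ≠ A := by
    rintro rfl
    exact hba (FreeGroup.toWord_injective (hB.trans hA.symm))
  have hBA' : B ≠ (A.1, !A.2) := by
    rintro rfl
    exact hba' (FreeGroup.toWord_injective (by simp [hA, hB, FreeGroup.invRev]))
  exact (hasSum_fk_dcone_mul_pow hA hB hBA hBA' (abs_lt.2 ht)).tsum_eq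

/-- the generating function of `C(a,b)` for letters `a, b` with
`b ∉ {a, a⁻¹}`. -/
theorem stmt14 {m : ℕ} (hm : 2 ≤ m) (a b : FG m)
    (ha : glen a = 1) (hb : glen b = 1) (hba : b ≠ a) (hba' : b ≠ a⁻¹) :
    ∀ t ∈ Set.Ioo (-1 : ℝ) 1,
      genFun (dcone a b) t
        = t ^ 2 / (4 * (m : ℝ) ^ 2 * (1 - t))
          + t ^ 2 / (4 * (m : ℝ) ^ 2 * (2 * (m : ℝ) - 1 + t)) :=
  stmt14_general a b ha hb hba hba'
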